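/- arXiv:2409.08385 — 6 statements merged into one kernel-verified Lean document; each statement's English description precedes it below -/
import Mathlib

section
/- Let Q̃ : E → ℝ be concave on all of E, and let Φ and Φ' be partitions of Ω such that Φ refines Φ'. Then the partition upper bound is monotone nonincreasing under refinement: L(Q̃;Φ) ≤ L(Q̃;Φ'). (Paper's Proposition 1, concave case, with the inequality in the mathematically correct direction.) -/
open Finset

/-- A partition of a finite type `Ω`: a finite collection of nonempty,
pairwise disjoint subsets of `Ω` whose union is all of `Ω`. -/
def IsPartition {Ω : Type*} [Fintype Ω] (Φ : Finset (Finset Ω)) : Prop :=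
  (∀ C ∈ Φ, C.Nonempty) ∧
    (∀ C ∈ Φ, ∀ D ∈ Φ, C ≠ D → Disjoint C D) ∧
      ∀ ω : Ω, ∃ C ∈ Φ, ω ∈ C

/-- `Φ` refines `Φ'`: every cell of `Φ` is contained in some cell of `Φ'`. -/
def Refines {Ω : Type*} (Φ Φ' : Finset (Finset Ω)) : Prop :=
  ∀ C ∈ Φ, ∃ C' ∈ Φ', C ⊆ C'

/-- Partition bound `L(f;Φ) = ∑_{C∈Φ} P(C) · f(ξ̄(C))`, where `P(C) = ∑_{ω∈C} p ω`
and `ξ̄(C) = P(C)⁻¹ • ∑_{ω∈C} p ω • ξ ω`. -/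
noncomputable def partBound {Ω : Type*} {E : Type*} [AddCommGroup E] [Module ℝ E]
    (p : Ω → ℝ) (ξ : Ω → E) (f : E → ℝ) (Φ : Finset (Finset Ω)) : ℝ :=
  ∑ C ∈ Φ, (∑ ω ∈ C, p ω) * f ((∑ ω ∈ C, p ω)⁻¹ • ∑ ω ∈ C, p ω • ξ ω)

/-- Expectation `E[f∘ξ] = ∑_{ω∈Ω} p ω · f (ξ ω)`. -/
noncomputable def expVal {Ω : Type*} [Fintype Ω] {E : Type*}
    (p : Ω → ℝ) (ξ : Ω → E) (f : E → ℝ) : ℝ :=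
  ∑ ω, p ω * f (ξ ω)

/-! Group the cells of `Φ` according to the cell of `Φ'` containing them. Each cell `C'` of `Φ'`
is the disjoint union of the cells of `Φ` inside it, so its conditional mean is the
`P`-weighted center of mass of their conditional means, and Jensen's inequality for the
concave `Q̃` bounds their contribution to `L(Q̃;Φ)` by the single term `P(C') Q̃(ξ̄(C'))`. -/

theorem Finset.centerMass_biUnion {ι κ R E : Type*} [DecidableEq ι] [Field R] [AddCommGroup E]
    [Module R E] {T : Finset κ} {t : κ → Finset ι}
    (hT : (T : Set κ).PairwiseDisjoint t) (w : ι → R) (z : ι → E)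
    (hw : ∀ k ∈ T, ∑ i ∈ t k, w i ≠ 0) :
    (T.biUnion t).centerMass w z =
      T.centerMass (fun k ↦ ∑ i ∈ t k, w i) (fun k ↦ (t k).centerMass w z) := by
  simp only [centerMass, sum_biUnion hT]
  congr 1
  exact sum_congr rfl fun k hk ↦ (smul_inv_smul₀ (hw k hk) _).symm

theorem ConcaveOn.sum_mul_map_centerMass_le_map_centerMass_biUnion
    {ι κ E : Type*} [DecidableEq ι] [AddCommGroup E] [Module ℝ E]
    {s : Set E} {f : E → ℝ} (hf : ConcaveOn ℝ s f) {T : Finset κ} {t : κ → Finset ι}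
    (hT : (T : Set κ).PairwiseDisjoint t) {w : ι → ℝ} {z : ι → E}
    (hw₀ : ∀ i ∈ T.biUnion t, 0 ≤ w i) (hw : ∀ k ∈ T, 0 < ∑ i ∈ t k, w i)
    (hz : ∀ i ∈ T.biUnion t, z i ∈ s) :
    ∑ k ∈ T, (∑ i ∈ t k, w i) * f ((t k).centerMass w z) ≤
      (∑ i ∈ T.biUnion t, w i) * f ((T.biUnion t).centerMass w z) := by
  rcases T.eq_empty_or_nonempty with rfl | hTne
  · simp
  set W := fun k ↦ ∑ i ∈ t k, w i
  have hW : 0 < ∑ k ∈ T, W k := sum_pos hw hTne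
  have hmem : ∀ k ∈ T, (t k).centerMass w z ∈ s := fun k hk ↦
    hf.1.centerMass_mem (fun i hi ↦ hw₀ i (mem_biUnion.2 ⟨k, hk, hi⟩)) (hw k hk)
      fun i hi ↦ hz i (mem_biUnion.2 ⟨k, hk, hi⟩)
  rw [centerMass_biUnion hT w z fun k hk ↦ (hw k hk).ne', sum_biUnion hT]
  calc ∑ k ∈ T, W k * f ((t k).centerMass w z)
      = (∑ k ∈ T, W k) * T.centerMass W (fun k ↦ f ((t k).centerMass w z)) := by
        simp only [centerMass, smul_eq_mul, mul_inv_cancel_left₀ hW.ne']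
    _ ≤ (∑ k ∈ T, W k) * f (T.centerMass W fun k ↦ (t k).centerMass w z) :=
        mul_le_mul_of_nonneg_left (hf.le_map_centerMass (fun k hk ↦ (hw k hk).le) hW hmem) hW.le

section Partition

variable {Ω : Type*} {Φ Φ' : Finset (Finset Ω)}

def cellsIn [DecidableEq Ω] (Φ : Finset (Finset Ω)) (C' : Finset Ω) : Finset (Finset Ω) :=
  Φ.filter (· ⊆ C')

theorem mem_cellsIn [DecidableEq Ω] {C C' : Finset Ω} : C ∈ cellsIn Φ C' ↔ C ∈ Φ ∧ C ⊆ C' :=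
  mem_filter

theorem Refines.biUnion_cellsIn [DecidableEq Ω] (href : Refines Φ Φ') :
    Φ'.biUnion (cellsIn Φ) = Φ := by
  ext C
  simp only [mem_biUnion, mem_cellsIn]
  exact ⟨fun ⟨_, _, hC, _⟩ ↦ hC, fun hC ↦ (href C hC).imp fun _ ⟨hC', hsub⟩ ↦ ⟨hC', hC, hsub⟩⟩

variable [Fintype Ω]

theorem IsPartition.pairwiseDisjoint (hΦ : IsPartition Φ) : (Φ : Set (Finset Ω)).PairwiseDisjoint id :=
  fun C hC D hD ↦ hΦ.2.1 C hC D hD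

theorem IsPartition.eq_of_mem_of_mem (hΦ : IsPartition Φ) {C D : Finset Ω} {ω : Ω}
    (hC : C ∈ Φ) (hD : D ∈ Φ) (hωC : ω ∈ C) (hωD : ω ∈ D) : C = D :=
  by_contra fun hne ↦ disjoint_left.1 (hΦ.2.1 C hC D hD hne) hωC hωD

theorem IsPartition.pairwiseDisjoint_cellsIn [DecidableEq Ω] (hΦ : IsPartition Φ)
    (hΦ' : IsPartition Φ') : (Φ' : Set (Finset Ω)).PairwiseDisjoint (cellsIn Φ) := by
  refine fun C' hC' D' hD' hne ↦ disjoint_left.2 fun C hCC' hCD' ↦ hne ?_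
  obtain ⟨hC, hsubC'⟩ := mem_cellsIn.1 hCC'
  obtain ⟨ω, hω⟩ := hΦ.1 C hC
  exact hΦ'.eq_of_mem_of_mem hC' hD' (hsubC' hω) ((mem_cellsIn.1 hCD').2 hω)

theorem Refines.biUnion_id_cellsIn [DecidableEq Ω] (href : Refines Φ Φ') (hΦ : IsPartition Φ)
    (hΦ' : IsPartition Φ') {C' : Finset Ω} (hC' : C' ∈ Φ') : (cellsIn Φ C').biUnion id = C' := by
  ext ω
  simp only [mem_biUnion, mem_cellsIn, id]
  refine ⟨fun ⟨_, ⟨_, hsub⟩, hω⟩ ↦ hsub hω, fun hω ↦ ?_⟩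
  obtain ⟨C, hC, hωC⟩ := hΦ.2.2 ω
  obtain ⟨D', hD', hsub⟩ := href C hC
  obtain rfl := hΦ'.eq_of_mem_of_mem hD' hC' (hsub hωC) hω
  exact ⟨C, ⟨hC, hsub⟩, hωC⟩

end Partition

theorem partBound_antitone_of_refines_concave_general
    {Ω : Type*} [Fintype Ω]
    {E : Type*} [AddCommGroup E] [Module ℝ E]
    (p : Ω → ℝ) (hp_pos : ∀ ω, 0 < p ω)
    (ξ : Ω → E) (Qt : E → ℝ) (hQt : ConcaveOn ℝ Set.univ Qt)
    (Φ Φ' : Finset (Finset Ω))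
    (hΦ : IsPartition Φ) (hΦ' : IsPartition Φ')
    (href : Refines Φ Φ') :
    partBound p ξ Qt Φ ≤ partBound p ξ Qt Φ' := by
  classical
  rw [partBound, partBound, ← href.biUnion_cellsIn, sum_biUnion (hΦ.pairwiseDisjoint_cellsIn hΦ')]
  refine sum_le_sum fun C' hC' ↦ ?_
  conv_rhs => rw [← href.biUnion_id_cellsIn hΦ hΦ' hC']
  exact hQt.sum_mul_map_centerMass_le_map_centerMass_biUnion
    (hΦ.pairwiseDisjoint.subset (filter_subset _ _)) (fun ω _ ↦ (hp_pos ω).le)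
    (fun C hC ↦ sum_pos (fun ω _ ↦ hp_pos ω) (hΦ.1 C (mem_cellsIn.1 hC).1))
    (fun _ _ ↦ Set.mem_univ _)

/-- Paper's Proposition 1 (concave case): if `Φ` refines `Φ'`, then
`L(Q̃;Φ) ≤ L(Q̃;Φ')` for concave `Q̃`. -/
theorem partBound_antitone_of_refines_concave
    {Ω : Type*} [Fintype Ω] [Nonempty Ω]
    {E : Type*} [AddCommGroup E] [Module ℝ E]
    (p : Ω → ℝ) (hp_pos : ∀ ω, 0 < p ω) (hp_sum : ∑ ω, p ω = 1)
    (ξ : Ω → E) (Qt : E → ℝ) (hQt : ConcaveOn ℝ Set.univ Qt)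
    (Φ Φ' : Finset (Finset Ω))
    (hΦ : IsPartition Φ) (hΦ' : IsPartition Φ')
    (href : Refines Φ Φ') :
    partBound p ξ Qt Φ ≤ partBound p ξ Qt Φ' :=
  partBound_antitone_of_refines_concave_general p hp_pos ξ Qt hQt Φ Φ' hΦ hΦ' href
end

section
/- Let Q̃ : E → ℝ be concave on all of E, and let Φ and Φ' be partitions of Ω such that Φ refines Φ'. Then the expected value is dominated by the partitioned Jensen upper bounds, which decrease monotonically under refinement: E[Q̃∘ξ] ≤ L(Q̃;Φ) ≤ L(Q̃;Φ'). -/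
open Finset

/-- Generalized Jensen for a concave function with positive (not necessarily
normalized) weights. -/
lemma jensen_gen {ι : Type*} {E : Type*} [AddCommGroup E] [Module ℝ E]
    (Qt : E → ℝ) (hQt : ConcaveOn ℝ Set.univ Qt)
    (t : Finset ι) (ht : t.Nonempty) (w : ι → ℝ) (hw : ∀ i ∈ t, 0 < w i)
    (x : ι → E) :
    ∑ i ∈ t, w i * Qt (x i) ≤
      (∑ i ∈ t, w i) * Qt ((∑ i ∈ t, w i)⁻¹ • ∑ i ∈ t, w i • x i) := by
  set P := ∑ i ∈ t, w i with hP
  have hPpos : 0 < P := Finset.sum_pos hw ht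
  have key : ∑ i ∈ t, (w i / P) • Qt (x i) ≤ Qt (∑ i ∈ t, (w i / P) • x i) := by
    apply hQt.le_map_sum
    · intro i hi; exact (div_nonneg (hw i hi).le hPpos.le)
    · rw [← Finset.sum_div, div_self hPpos.ne']
    · intro i _; trivial
  have h1 : ∑ i ∈ t, (w i / P) • x i = P⁻¹ • ∑ i ∈ t, w i • x i := by
    rw [Finset.smul_sum]
    refine Finset.sum_congr rfl fun i _ => ?_
    rw [div_eq_inv_mul, mul_smul]
  have h2 : ∑ i ∈ t, (w i / P) • Qt (x i) = P⁻¹ * ∑ i ∈ t, w i * Qt (x i) := by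
    rw [Finset.mul_sum]
    refine Finset.sum_congr rfl fun i _ => ?_
    simp [div_eq_inv_mul, mul_assoc]
  rw [h1, h2] at key
  calc ∑ i ∈ t, w i * Qt (x i)
      = P * (P⁻¹ * ∑ i ∈ t, w i * Qt (x i)) := by
        rw [← mul_assoc, mul_inv_cancel₀ hPpos.ne', one_mul]
    _ ≤ P * Qt (P⁻¹ • ∑ i ∈ t, w i • x i) := by
        exact mul_le_mul_of_nonneg_left key hPpos.le

/-- Sum over cells of a pairwise disjoint family equals the sum over their union. -/
lemma sum_cells {Ω : Type*} [DecidableEq Ω] {M : Type*} [AddCommMonoid M]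
    (Φ : Finset (Finset Ω)) (hdisj : ∀ C ∈ Φ, ∀ D ∈ Φ, C ≠ D → Disjoint C D)
    (g : Ω → M) :
    ∑ C ∈ Φ, ∑ ω ∈ C, g ω = ∑ ω ∈ Φ.biUnion (fun C => C), g ω :=
  (Finset.sum_biUnion (fun C hC D hD h => hdisj C hC D hD h)).symm

/-- Paper's Lemma 2, upper-bound chain: for concave `Q̃` and `Φ` refining `Φ'`,
`E[Q̃∘ξ] ≤ L(Q̃;Φ) ≤ L(Q̃;Φ')`. -/
theorem expVal_le_partBound_antitone
    {Ω : Type*} [Fintype Ω] [Nonempty Ω]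
    {E : Type*} [AddCommGroup E] [Module ℝ E]
    (p : Ω → ℝ) (hp_pos : ∀ ω, 0 < p ω) (hp_sum : ∑ ω, p ω = 1)
    (ξ : Ω → E) (Qt : E → ℝ) (hQt : ConcaveOn ℝ Set.univ Qt)
    (Φ Φ' : Finset (Finset Ω))
    (hΦ : IsPartition Φ) (hΦ' : IsPartition Φ')
    (href : Refines Φ Φ') :
    expVal p ξ Qt ≤ partBound p ξ Qt Φ ∧ partBound p ξ Qt Φ ≤ partBound p ξ Qt Φ' := by
  classical
  obtain ⟨hΦne, hΦdisj, hΦcov⟩ := hΦ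
  obtain ⟨hΦ'ne, hΦ'disj, hΦ'cov⟩ := hΦ'
  have huniv : Φ.biUnion (fun C => C) = Finset.univ := by
    apply Finset.eq_univ_of_forall
    intro ω
    obtain ⟨C, hC, hω⟩ := hΦcov ω
    exact Finset.mem_biUnion.2 ⟨C, hC, hω⟩
  constructor
  · -- E ≤ L(Φ)
    rw [expVal, partBound, ← huniv, ← sum_cells Φ hΦdisj (fun ω => p ω * Qt (ξ ω))]
    apply Finset.sum_le_sum
    intro C hC
    exact jensen_gen Qt hQt C (hΦne C hC) p (fun ω _ => hp_pos ω) ξ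
  · -- L(Φ) ≤ L(Φ')
    rw [partBound, partBound]
    -- map each cell of Φ to the (unique) cell of Φ' containing it
    have hfib : ∀ C ∈ Φ, ∀ C' ∈ Φ', ∀ D' ∈ Φ', C ⊆ C' → C ⊆ D' → C' = D' := by
      intro C hC C' hC' D' hD' h1 h2
      by_contra hne
      obtain ⟨ω, hω⟩ := hΦne C hC
      exact Finset.disjoint_left.1 (hΦ'disj C' hC' D' hD' hne) (h1 hω) (h2 hω)
    choose! f hf hfsub using href
    have hfilter : ∀ C' ∈ Φ', Φ.filter (fun C => C ⊆ C') = Φ.filter (fun C => f C = C') := by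
      intro C' hC'
      apply Finset.filter_congr
      intro C hC
      constructor
      · intro h; exact (hfib C hC (f C) (hf C hC) C' hC' (hfsub C hC) h)
      · intro h; rw [← h]; exact hfsub C hC
    have hregroup : ∀ (g : Finset Ω → ℝ),
        ∑ C ∈ Φ, g C = ∑ C' ∈ Φ', ∑ C ∈ Φ.filter (fun C => C ⊆ C'), g C := by
      intro g
      rw [← Finset.sum_fiberwise_of_maps_to (fun C hC => hf C hC) g]
      exact Finset.sum_congr rfl fun C' hC' => by rw [hfilter C' hC']
    -- cells of Φ inside C' cover C'
    have hcover : ∀ C' ∈ Φ', (Φ.filter (fun C => C ⊆ C')).biUnion (fun C => C) = C' := by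
      intro C' hC'
      apply Finset.Subset.antisymm
      · intro ω hω
        obtain ⟨C, hC, hωC⟩ := Finset.mem_biUnion.1 hω
        exact (Finset.mem_filter.1 hC).2 hωC
      · intro ω hω
        obtain ⟨C, hC, hωC⟩ := hΦcov ω
        have : C ⊆ C' := by
          have := hfib C hC (f C) (hf C hC) C' hC' (hfsub C hC)
          obtain ⟨D', hD', hsub⟩ := hΦ'cov ω
          -- f C contains ω, and C' contains ω, so f C = C'
          have hωf : ω ∈ f C := hfsub C hC hωC
          by_cases hne : f C = C'
          · rw [← hne]; exact hfsub C hC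
          · exact absurd (Finset.disjoint_left.1 (hΦ'disj (f C) (hf C hC) C' hC' hne) hωf) (fun h => h hω)
        exact Finset.mem_biUnion.2 ⟨C, Finset.mem_filter.2 ⟨hC, this⟩, hωC⟩
    have hdisj' : ∀ (C' : Finset Ω), ∀ C ∈ Φ.filter (fun C => C ⊆ C'),
        ∀ D ∈ Φ.filter (fun C => C ⊆ C'), C ≠ D → Disjoint C D := fun C' C hC D hD hCD =>
      hΦdisj C (Finset.mem_filter.1 hC).1 D (Finset.mem_filter.1 hD).1 hCD
    rw [hregroup]
    apply Finset.sum_le_sum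
    intro C' hC'
    set t := Φ.filter (fun C => C ⊆ C') with ht
    have htne : t.Nonempty := by
      obtain ⟨ω, hω⟩ := hΦ'ne C' hC'
      have : ω ∈ t.biUnion (fun C => C) := by rw [ht, hcover C' hC']; exact hω
      obtain ⟨C, hC, _⟩ := Finset.mem_biUnion.1 this
      exact ⟨C, hC⟩
    have hPpos : ∀ C ∈ t, 0 < ∑ ω ∈ C, p ω := by
      intro C hC
      exact Finset.sum_pos (fun ω _ => hp_pos ω) (hΦne C (Finset.mem_filter.1 hC).1)
    have hJ := jensen_gen Qt hQt t htne (fun C => ∑ ω ∈ C, p ω) hPpos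
      (fun C => (∑ ω ∈ C, p ω)⁻¹ • ∑ ω ∈ C, p ω • ξ ω)
    have hw : ∑ C ∈ t, ∑ ω ∈ C, p ω = ∑ ω ∈ C', p ω := by
      rw [sum_cells t (hdisj' C') p, ht, hcover C' hC']
    have hx : ∑ C ∈ t, (∑ ω ∈ C, p ω) • ((∑ ω ∈ C, p ω)⁻¹ • ∑ ω ∈ C, p ω • ξ ω)
        = ∑ ω ∈ C', p ω • ξ ω := by
      rw [← hcover C' hC', ← sum_cells (Φ.filter (fun C => C ⊆ C')) (hdisj' C') (fun ω => p ω • ξ ω), ← ht]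
      refine Finset.sum_congr rfl fun C hC => ?_
      rw [smul_inv_smul₀ (hPpos C hC).ne']
    rw [hw, hx] at hJ
    exact hJ
end

section
/- Let Q : E → ℝ be convex on all of E and Q̃ : E → ℝ be concave on all of E with Q̃(ξ ω) = Q(ξ ω) for every ω ∈ Ω (a concave equivalent recourse function). Then for any partition Φ of Ω, the expected recourse value is sandwiched between the convex-based lower bound and the concave-based upper bound: L(Q;Φ) ≤ E[Q∘ξ] ≤ L(Q̃;Φ). (Paper's bound (21) used to compute the approximation gap of a partition.) -/
open Finset

lemma cell_jensen {Ω : Type*} {E : Type*} [AddCommGroup E] [Module ℝ E]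
    (p : Ω → ℝ) (hp_pos : ∀ ω, 0 < p ω) (ξ : Ω → E) (Q : E → ℝ)
    (hQ : ConvexOn ℝ Set.univ Q) (C : Finset Ω) (hC : C.Nonempty) :
    (∑ ω ∈ C, p ω) * Q ((∑ ω ∈ C, p ω)⁻¹ • ∑ ω ∈ C, p ω • ξ ω) ≤
      ∑ ω ∈ C, p ω * Q (ξ ω) := by
  have hPpos : 0 < ∑ ω ∈ C, p ω := Finset.sum_pos (fun ω _ => hp_pos ω) hC
  have h := hQ.map_centerMass_le (fun ω _ => (hp_pos ω).le) hPpos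
      (fun ω _ => Set.mem_univ (ξ ω))
  rw [Finset.centerMass] at h
  calc (∑ ω ∈ C, p ω) * Q ((∑ ω ∈ C, p ω)⁻¹ • ∑ ω ∈ C, p ω • ξ ω)
      ≤ (∑ ω ∈ C, p ω) * C.centerMass p (Q ∘ ξ) :=
        mul_le_mul_of_nonneg_left h hPpos.le
    _ = ∑ ω ∈ C, p ω * Q (ξ ω) := by
        rw [Finset.centerMass, smul_eq_mul, ← mul_assoc, mul_inv_cancel₀ hPpos.ne', one_mul]
        simp [Function.comp]

/-- Paper's bound (21): for convex `Q` and a concave equivalent recourse function `Q̃`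
(`Q̃(ξ ω) = Q(ξ ω)` for all `ω`), any partition `Φ` sandwiches the expected value:
`L(Q;Φ) ≤ E[Q∘ξ] ≤ L(Q̃;Φ)`. -/
theorem partBound_sandwich
    {Ω : Type*} [Fintype Ω] [Nonempty Ω]
    {E : Type*} [AddCommGroup E] [Module ℝ E]
    (p : Ω → ℝ) (hp_pos : ∀ ω, 0 < p ω) (hp_sum : ∑ ω, p ω = 1)
    (ξ : Ω → E) (Q : E → ℝ) (hQ : ConvexOn ℝ Set.univ Q)
    (Qt : E → ℝ) (hQt : ConcaveOn ℝ Set.univ Qt)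
    (heq : ∀ ω : Ω, Qt (ξ ω) = Q (ξ ω))
    (Φ : Finset (Finset Ω)) (hΦ : IsPartition Φ) :
    partBound p ξ Q Φ ≤ expVal p ξ Q ∧ expVal p ξ Q ≤ partBound p ξ Qt Φ := by
  classical
  obtain ⟨hne, hdisj, hcov⟩ := hΦ
  have huniv : (Finset.univ : Finset Ω) = Φ.biUnion id := by
    ext ω
    simp only [mem_univ, mem_biUnion, id, true_iff]
    exact hcov ω
  have hpd : Set.PairwiseDisjoint (↑Φ) (id : Finset Ω → Finset Ω) :=
    fun C hC D hD h => hdisj C hC D hD h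
  have hsplit : ∀ g : Ω → ℝ, (∑ ω, g ω) = ∑ C ∈ Φ, ∑ ω ∈ C, g ω := by
    intro g
    rw [huniv, Finset.sum_biUnion hpd]; rfl
  unfold partBound expVal
  constructor
  · rw [hsplit fun ω => p ω * Q (ξ ω)]
    exact Finset.sum_le_sum fun C hC => cell_jensen p hp_pos ξ Q hQ C (hne C hC)
  · have heq2 : (∑ ω, p ω * Q (ξ ω)) = ∑ ω, p ω * Qt (ξ ω) := by
      simp [heq]
    rw [heq2, hsplit fun ω => p ω * Qt (ξ ω)]
    refine Finset.sum_le_sum fun C hC => ?_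
    have h := cell_jensen p hp_pos ξ (fun x => -Qt x) hQt.neg C (hne C hC)
    simp only [mul_neg, Finset.sum_neg_distrib] at h
    linarith
end

section
/- Let Q̃ : E → ℝ be concave on all of E, and let Φ and Φ' be partitions of Ω such that Φ refines Φ'. Then the attacker's optimal objective is bounded above by the partition-based optima, monotonically in refinement: max_{v∈V} E_v[Q̃∘ξ] ≤ max_{v∈V} L_v(Q̃;Φ) ≤ max_{v∈V} L_v(Q̃;Φ'). -/
open Finset

/-- Weighted Jensen inequality for concave functions, in the scaled form used here. -/
lemma jensen_pts {E : Type*} [AddCommGroup E] [Module ℝ E] {ι : Type*}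
    (s : Finset ι) (w : ι → ℝ) (z : ι → E) (f : E → ℝ)
    (hf : ConcaveOn ℝ Set.univ f) (hw : ∀ i ∈ s, 0 < w i) (hs : s.Nonempty) :
    ∑ i ∈ s, w i * f (z i) ≤ (∑ i ∈ s, w i) * f ((∑ i ∈ s, w i)⁻¹ • ∑ i ∈ s, w i • z i) := by
  have hW : 0 < ∑ i ∈ s, w i := Finset.sum_pos hw hs
  have h := hf.le_map_centerMass (t := s) (w := w) (p := z)
    (fun i hi => (hw i hi).le) hW (fun i _ => Set.mem_univ _)
  have h1 : s.centerMass w (f ∘ z) = (∑ i ∈ s, w i)⁻¹ * ∑ i ∈ s, w i * f (z i) := by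
    simp [Finset.centerMass, smul_eq_mul, Finset.mul_sum]
  have h2 : s.centerMass w z = (∑ i ∈ s, w i)⁻¹ • ∑ i ∈ s, w i • z i := by
    simp [Finset.centerMass]
  rw [h1, h2] at h
  calc ∑ i ∈ s, w i * f (z i)
      = (∑ i ∈ s, w i) * ((∑ i ∈ s, w i)⁻¹ * ∑ i ∈ s, w i * f (z i)) := by
        field_simp
    _ ≤ (∑ i ∈ s, w i) * f ((∑ i ∈ s, w i)⁻¹ • ∑ i ∈ s, w i • z i) := by
        exact mul_le_mul_of_nonneg_left h hW.le

/-- Summing over the cells of a pairwise-disjoint family equals summing over its union. -/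
lemma sum_over_cells {Ω : Type*} [DecidableEq Ω] {M : Type*} [AddCommMonoid M]
    (Ψ : Finset (Finset Ω)) (hd : ∀ C ∈ Ψ, ∀ D ∈ Ψ, C ≠ D → Disjoint C D)
    (g : Ω → M) :
    ∑ C ∈ Ψ, ∑ ω ∈ C, g ω = ∑ ω ∈ Ψ.biUnion id, g ω :=
  (Finset.sum_biUnion (fun C hC D hD hCD => hd C hC D hD hCD)).symm

/-- Paper's Corollary 4: for concave `Q̃` and `Φ` refining `Φ'`, the attacker's
optimal objective satisfies
`max_v E_v[Q̃∘ξ] ≤ max_v L_v(Q̃;Φ) ≤ max_v L_v(Q̃;Φ')`. -/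
theorem attacker_ub_mono
    {Ω : Type*} [Fintype Ω] [Nonempty Ω]
    {V : Type*} [Fintype V] [Nonempty V]
    {E : Type*} [AddCommGroup E] [Module ℝ E]
    (p : V → Ω → ℝ) (hp_pos : ∀ v ω, 0 < p v ω) (hp_sum : ∀ v, ∑ ω, p v ω = 1)
    (ξ : Ω → E) (Qt : E → ℝ) (hQt : ConcaveOn ℝ Set.univ Qt)
    (Φ Φ' : Finset (Finset Ω))
    (hΦ : IsPartition Φ) (hΦ' : IsPartition Φ')
    (href : Refines Φ Φ') :
    (Finset.univ.sup' Finset.univ_nonempty fun v => expVal (p v) ξ Qt) ≤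
      (Finset.univ.sup' Finset.univ_nonempty fun v => partBound (p v) ξ Qt Φ) ∧
    (Finset.univ.sup' Finset.univ_nonempty fun v => partBound (p v) ξ Qt Φ) ≤
      (Finset.univ.sup' Finset.univ_nonempty fun v => partBound (p v) ξ Qt Φ') := by
  classical
  obtain ⟨hne, hdisj, hcov⟩ := hΦ
  obtain ⟨hne', hdisj', hcov'⟩ := hΦ'
  have hbU : Φ.biUnion id = Finset.univ := by
    apply Finset.eq_univ_of_forall
    intro ω
    obtain ⟨C, hC, hωC⟩ := hcov ω
    exact Finset.mem_biUnion.mpr ⟨C, hC, hωC⟩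
  -- For each cell C ∈ Φ, the Φ'-cell containing it is unique; find it.
  have hsub : ∀ C ∈ Φ, ∀ C' ∈ Φ', (C ∩ C').Nonempty → C ⊆ C' := by
    intro C hC C' hC' ⟨ω, hω⟩
    obtain ⟨D', hD', hCD'⟩ := href C hC
    have : D' = C' := by
      by_contra hne2
      exact (Finset.disjoint_left.mp (hdisj' D' hD' C' hC' hne2))
        (hCD' (Finset.mem_inter.mp hω).1) (Finset.mem_inter.mp hω).2
    exact this ▸ hCD'
  constructor
  · -- expVal ≤ partBound Φ
    apply Finset.sup'_mono_fun
    intro v _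
    have key : expVal (p v) ξ Qt = ∑ C ∈ Φ, ∑ ω ∈ C, p v ω * Qt (ξ ω) := by
      rw [expVal, sum_over_cells Φ hdisj, hbU]
    rw [key, partBound]
    apply Finset.sum_le_sum
    intro C hC
    exact jensen_pts C (p v) ξ Qt hQt (fun ω _ => hp_pos v ω) (hne C hC)
  · -- partBound Φ ≤ partBound Φ'
    apply Finset.sup'_mono_fun
    intro v _
    -- group cells of Φ by the Φ'-cell they sit in
    have hgroup : ∀ C ∈ Φ, ∃! C', C' ∈ Φ' ∧ C ⊆ C' := by
      intro C hC
      obtain ⟨C', hC', hCC'⟩ := href C hC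
      refine ⟨C', ⟨hC', hCC'⟩, ?_⟩
      rintro D' ⟨hD', hCD'⟩
      obtain ⟨ω, hω⟩ := hne C hC
      by_contra hne2
      exact (Finset.disjoint_left.mp (hdisj' D' hD' C' hC' hne2)) (hCD' hω) (hCC' hω)
    have hΦeq : Φ = Φ'.biUnion (fun C' => Φ.filter (fun C => C ⊆ C' ∧ C.Nonempty)) := by
      ext C
      simp only [Finset.mem_biUnion, Finset.mem_filter]
      constructor
      · intro hC
        obtain ⟨C', hC', hCC'⟩ := href C hC
        exact ⟨C', hC', hC, hCC', hne C hC⟩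
      · rintro ⟨C', _, hC, _⟩; exact hC
    have hdisjF : ∀ C' ∈ Φ', ∀ D' ∈ Φ', C' ≠ D' →
        Disjoint (Φ.filter (fun C => C ⊆ C' ∧ C.Nonempty))
          (Φ.filter (fun C => C ⊆ D' ∧ C.Nonempty)) := by
      intro C' hC' D' hD' hne2
      rw [Finset.disjoint_left]
      rintro C hC1 hC2
      rw [Finset.mem_filter] at hC1 hC2
      obtain ⟨ω, hω⟩ := hC1.2.2
      exact (Finset.disjoint_left.mp (hdisj' C' hC' D' hD' hne2))
        (hC1.2.1 hω) (hC2.2.1 hω)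
    rw [partBound, partBound, hΦeq, Finset.sum_biUnion hdisjF]
    apply Finset.sum_le_sum
    intro C' hC'
    -- cells of Φ inside C' partition C'
    set Ψ := Φ.filter (fun C => C ⊆ C' ∧ C.Nonempty) with hΨ
    have hΨdisj : ∀ C ∈ Ψ, ∀ D ∈ Ψ, C ≠ D → Disjoint C D := fun C hC D hD h =>
      hdisj C (Finset.mem_filter.mp hC).1 D (Finset.mem_filter.mp hD).1 h
    have hΨU : Ψ.biUnion id = C' := by
      ext ω
      simp only [Finset.mem_biUnion, id, hΨ, Finset.mem_filter]
      constructor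
      · rintro ⟨C, ⟨hC, hCC', _⟩, hω⟩; exact hCC' hω
      · intro hω
        obtain ⟨C, hC, hωC⟩ := hcov ω
        refine ⟨C, ⟨hC, ?_, hne C hC⟩, hωC⟩
        exact hsub C hC C' hC' ⟨ω, Finset.mem_inter.mpr ⟨hωC, hω⟩⟩
    have hΨne : Ψ.Nonempty := by
      obtain ⟨ω, hω⟩ := hne' C' hC'
      have : ω ∈ Ψ.biUnion id := hΨU ▸ hω
      obtain ⟨C, hC, _⟩ := Finset.mem_biUnion.mp this
      exact ⟨C, hC⟩
    have hwpos : ∀ C ∈ Ψ, 0 < ∑ ω ∈ C, p v ω := by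
      intro C hC
      exact Finset.sum_pos (fun ω _ => hp_pos v ω) (Finset.mem_filter.mp hC).2.2
    have hWsum : ∑ C ∈ Ψ, ∑ ω ∈ C, p v ω = ∑ ω ∈ C', p v ω := by
      rw [sum_over_cells Ψ hΨdisj, hΨU]
    have hVsum : ∑ C ∈ Ψ, (∑ ω ∈ C, p v ω) •
        ((∑ ω ∈ C, p v ω)⁻¹ • ∑ ω ∈ C, p v ω • ξ ω) = ∑ ω ∈ C', p v ω • ξ ω := by
      have : ∀ C ∈ Ψ, (∑ ω ∈ C, p v ω) •
          ((∑ ω ∈ C, p v ω)⁻¹ • ∑ ω ∈ C, p v ω • ξ ω) = ∑ ω ∈ C, p v ω • ξ ω := by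
        intro C hC
        rw [smul_inv_smul₀ (hwpos C hC).ne']
      rw [Finset.sum_congr rfl this, sum_over_cells Ψ hΨdisj, hΨU]
    have := jensen_pts Ψ (fun C => ∑ ω ∈ C, p v ω)
      (fun C => (∑ ω ∈ C, p v ω)⁻¹ • ∑ ω ∈ C, p v ω • ξ ω) Qt hQt hwpos hΨne
    rw [hWsum, hVsum] at this
    exact this
end

section
/- Let Q : E → ℝ be convex on all of E, and let Φ and Φ' be partitions of Ω such that Φ refines Φ'. Then the defender-attacker min-max value is bounded below by the partition-based min-max values, monotonically in refinement: min_{x∈X} max_{v∈V} E_{x,v}[Q∘ξ] ≥ min_{x∈X} max_{v∈V} L_{x,v}(Q;Φ) ≥ min_{x∈X} max_{v∈V} L_{x,v}(Q;Φ'). (Paper's Proposition 5: monotonic lower bound on the defender-attacker problem.) -/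
open Finset

/-- Core monotonicity: if `Φ` refines `Φ'`, the partition bound increases. -/
lemma partBound_mono_aux {Ω : Type*} [Fintype Ω] {E : Type*} [AddCommGroup E] [Module ℝ E]
    (p : Ω → ℝ) (hp : ∀ ω, 0 < p ω) (ξ : Ω → E) (Q : E → ℝ)
    (hQ : ConvexOn ℝ Set.univ Q)
    {Φ Φ' : Finset (Finset Ω)} (hΦ : IsPartition Φ) (hΦ' : IsPartition Φ')
    (href : Refines Φ Φ') :
    partBound p ξ Q Φ' ≤ partBound p ξ Q Φ := by
  classical
  obtain ⟨hne, hdisj, hcov⟩ := hΦ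
  obtain ⟨hne', hdisj', hcov'⟩ := hΦ'
  -- parent map
  have hg : ∀ C ∈ Φ, ∃ C' ∈ Φ', C ⊆ C' := href
  set g : Finset Ω → Finset Ω := fun C =>
    if h : ∃ C' ∈ Φ', C ⊆ C' then h.choose else ∅ with hgdef
  have hgmem : ∀ C ∈ Φ, g C ∈ Φ' ∧ C ⊆ g C := by
    intro C hC
    have h := hg C hC
    simp only [hgdef, dif_pos h]
    exact ⟨h.choose_spec.1, h.choose_spec.2⟩
  have hguniq : ∀ C ∈ Φ, ∀ C' ∈ Φ', (C ∩ C').Nonempty → g C = C' := by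
    intro C hC C' hC' ⟨ω, hω⟩
    by_contra hne2
    have := hdisj' (g C) (hgmem C hC).1 C' hC' hne2
    exact (Finset.disjoint_left.1 this ((hgmem C hC).2 (Finset.mem_inter.1 hω).1)
      (Finset.mem_inter.1 hω).2)
  -- each C' is the disjoint union of its fiber
  have hfiber : ∀ C' ∈ Φ', C' = (Φ.filter (fun C => g C = C')).biUnion id := by
    intro C' hC'
    ext ω
    simp only [Finset.mem_biUnion, Finset.mem_filter, id]
    constructor
    · intro hω
      obtain ⟨C, hC, hωC⟩ := hcov ω
      exact ⟨C, ⟨hC, hguniq C hC C' hC' ⟨ω, Finset.mem_inter.2 ⟨hωC, hω⟩⟩⟩, hωC⟩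
    · rintro ⟨C, ⟨hC, hgC⟩, hωC⟩
      exact hgC ▸ (hgmem C hC).2 hωC
  have hdisjfib : ∀ C' ∈ Φ', ∀ s : Finset Ω → ℝ → Prop, True := fun _ _ _ => trivial
  -- rewrite partBound Φ as a double sum
  have hmaps : ∀ C ∈ Φ, g C ∈ Φ' := fun C hC => (hgmem C hC).1
  rw [partBound, partBound, ← Finset.sum_fiberwise_of_maps_to hmaps]
  apply Finset.sum_le_sum
  intro C' hC'
  set S := Φ.filter (fun C => g C = C') with hS
  have hdisjS : ∀ C ∈ S, ∀ D ∈ S, C ≠ D → Disjoint C D := by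
    intro C hC D hD hne2
    exact hdisj C (Finset.mem_filter.1 hC).1 D (Finset.mem_filter.1 hD).1 hne2
  have hsplit : ∀ f : Ω → ℝ, ∑ ω ∈ C', f ω = ∑ C ∈ S, ∑ ω ∈ C, f ω := by
    intro f
    rw [hfiber C' hC', Finset.sum_biUnion]
    · rfl
    · intro C hC D hD hne2
      exact hdisjS C hC D hD hne2
  have hsplitE : ∑ ω ∈ C', p ω • ξ ω = ∑ C ∈ S, ∑ ω ∈ C, p ω • ξ ω := by
    rw [hfiber C' hC', Finset.sum_biUnion]
    · rfl
    · intro C hC D hD hne2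
      exact hdisjS C hC D hD hne2
  have hPpos : ∀ C ∈ S, 0 < ∑ ω ∈ C, p ω := by
    intro C hC
    have hCne := hne C (Finset.mem_filter.1 hC).1
    exact Finset.sum_pos (fun ω _ => hp ω) hCne
  have hSne : S.Nonempty := by
    obtain ⟨ω, hω⟩ := hne' C' hC'
    obtain ⟨C, hC, hωC⟩ := hcov ω
    exact ⟨C, Finset.mem_filter.2 ⟨hC, hguniq C hC C' hC' ⟨ω, Finset.mem_inter.2 ⟨hωC, hω⟩⟩⟩⟩
  have hPsum : ∑ ω ∈ C', p ω = ∑ C ∈ S, ∑ ω ∈ C, p ω := hsplit p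
  have hPpos' : 0 < ∑ ω ∈ C', p ω := by
    rw [hPsum]
    exact Finset.sum_pos (fun C hC => hPpos C hC) hSne
  -- Jensen on the cells of S
  have hjensen := hQ.map_centerMass_le (t := S)
    (w := fun C => ∑ ω ∈ C, p ω)
    (p := fun C => (∑ ω ∈ C, p ω)⁻¹ • ∑ ω ∈ C, p ω • ξ ω)
    (fun C hC => (hPpos C hC).le) (by rw [← hPsum]; exact hPpos')
    (fun C _ => Set.mem_univ _)
  have hcm : S.centerMass (fun C => ∑ ω ∈ C, p ω)
      (fun C => (∑ ω ∈ C, p ω)⁻¹ • ∑ ω ∈ C, p ω • ξ ω)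
      = (∑ ω ∈ C', p ω)⁻¹ • ∑ ω ∈ C', p ω • ξ ω := by
    rw [Finset.centerMass, ← hPsum, hsplitE]
    congr 1
    apply Finset.sum_congr rfl
    intro C hC
    exact smul_inv_smul₀ (hPpos C hC).ne' _
  rw [hcm] at hjensen
  have : (∑ ω ∈ C', p ω) * Q ((∑ ω ∈ C', p ω)⁻¹ • ∑ ω ∈ C', p ω • ξ ω)
      ≤ (∑ ω ∈ C', p ω) * S.centerMass (fun C => ∑ ω ∈ C, p ω)
        (fun C => Q ((∑ ω ∈ C, p ω)⁻¹ • ∑ ω ∈ C, p ω • ξ ω)) :=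
    mul_le_mul_of_nonneg_left hjensen hPpos'.le
  refine this.trans_eq ?_
  rw [Finset.centerMass, ← hPsum, smul_eq_mul, ← mul_assoc,
    mul_inv_cancel₀ hPpos'.ne', one_mul]
  rfl

/-- The singleton partition gives exactly the expectation. -/
lemma partBound_singletons {Ω : Type*} [Fintype Ω] [DecidableEq Ω] {E : Type*} [AddCommGroup E] [Module ℝ E]
    (p : Ω → ℝ) (hp : ∀ ω, 0 < p ω) (ξ : Ω → E) (Q : E → ℝ) :
    partBound p ξ Q (Finset.univ.image fun ω => ({ω} : Finset Ω)) = expVal p ξ Q := by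
  classical
  rw [partBound, Finset.sum_image (by intro a _ b _ h; exact Finset.singleton_injective h)]
  apply Finset.sum_congr rfl
  intro ω _
  rw [Finset.sum_singleton, Finset.sum_singleton, inv_smul_smul₀ (hp ω).ne']

lemma isPartition_singletons {Ω : Type*} [Fintype Ω] [DecidableEq Ω] :
    IsPartition (Finset.univ.image fun ω => ({ω} : Finset Ω)) := by
  classical
  refine ⟨?_, ?_, ?_⟩
  · intro C hC
    obtain ⟨ω, _, rfl⟩ := Finset.mem_image.1 hC
    exact Finset.singleton_nonempty ω
  · intro C hC D hD hne
    obtain ⟨a, _, rfl⟩ := Finset.mem_image.1 hC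
    obtain ⟨b, _, rfl⟩ := Finset.mem_image.1 hD
    simp only [Finset.disjoint_singleton]
    exact fun h => hne (by rw [h])
  · intro ω
    exact ⟨{ω}, Finset.mem_image_of_mem _ (Finset.mem_univ ω), Finset.mem_singleton_self ω⟩

lemma refines_singletons {Ω : Type*} [Fintype Ω] [DecidableEq Ω] {Φ : Finset (Finset Ω)}
    (hΦ : IsPartition Φ) :
    Refines (Finset.univ.image fun ω => ({ω} : Finset Ω)) Φ := by
  intro C hC
  obtain ⟨ω, _, rfl⟩ := Finset.mem_image.1 hC
  obtain ⟨D, hD, hωD⟩ := hΦ.2.2 ω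
  exact ⟨D, hD, Finset.singleton_subset_iff.2 hωD⟩

lemma partBound_le_expVal {Ω : Type*} [Fintype Ω] {E : Type*} [AddCommGroup E] [Module ℝ E]
    (p : Ω → ℝ) (hp : ∀ ω, 0 < p ω) (ξ : Ω → E) (Q : E → ℝ)
    (hQ : ConvexOn ℝ Set.univ Q) {Φ : Finset (Finset Ω)} (hΦ : IsPartition Φ) :
    partBound p ξ Q Φ ≤ expVal p ξ Q := by
  classical
  rw [← partBound_singletons p hp ξ Q]
  exact partBound_mono_aux p hp ξ Q hQ isPartition_singletons hΦ (refines_singletons hΦ)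

lemma minmax_mono {X V : Type*} [Fintype X] [Nonempty X] [Fintype V] [Nonempty V]
    {f g : X → V → ℝ} (h : ∀ x v, f x v ≤ g x v) :
    (Finset.univ.inf' Finset.univ_nonempty fun x =>
      Finset.univ.sup' Finset.univ_nonempty fun v => f x v) ≤
    (Finset.univ.inf' Finset.univ_nonempty fun x =>
      Finset.univ.sup' Finset.univ_nonempty fun v => g x v) := by
  apply Finset.le_inf'
  intro x _
  refine le_trans (Finset.inf'_le _ (Finset.mem_univ x)) ?_
  apply Finset.sup'_le
  intro v _
  exact le_trans (h x v) (Finset.le_sup' _ (Finset.mem_univ v))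

/-- Paper's Proposition 5: for convex `Q` and `Φ` refining `Φ'`, the
defender-attacker min-max value satisfies
`min_x max_v E_{x,v}[Q∘ξ] ≥ min_x max_v L_{x,v}(Q;Φ) ≥ min_x max_v L_{x,v}(Q;Φ')`. -/

theorem defender_attacker_lb_mono
    {Ω : Type*} [Fintype Ω] [Nonempty Ω]
    {X : Type*} [Fintype X] [Nonempty X]
    {V : Type*} [Fintype V] [Nonempty V]
    {E : Type*} [AddCommGroup E] [Module ℝ E]
    (p : X → V → Ω → ℝ) (hp_pos : ∀ x v ω, 0 < p x v ω)
    (hp_sum : ∀ x v, ∑ ω, p x v ω = 1)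
    (ξ : Ω → E) (Q : E → ℝ) (hQ : ConvexOn ℝ Set.univ Q)
    (Φ Φ' : Finset (Finset Ω))
    (hΦ : IsPartition Φ) (hΦ' : IsPartition Φ')
    (href : Refines Φ Φ') :
    (Finset.univ.inf' Finset.univ_nonempty fun x =>
        Finset.univ.sup' Finset.univ_nonempty fun v => expVal (p x v) ξ Q) ≥
      (Finset.univ.inf' Finset.univ_nonempty fun x =>
        Finset.univ.sup' Finset.univ_nonempty fun v => partBound (p x v) ξ Q Φ) ∧
    (Finset.univ.inf' Finset.univ_nonempty fun x =>
        Finset.univ.sup' Finset.univ_nonempty fun v => partBound (p x v) ξ Q Φ) ≥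
      (Finset.univ.inf' Finset.univ_nonempty fun x =>
        Finset.univ.sup' Finset.univ_nonempty fun v => partBound (p x v) ξ Q Φ') := by
  constructor
  · exact minmax_mono fun x v => partBound_le_expVal (p x v) (hp_pos x v) ξ Q hQ hΦ
  · exact minmax_mono fun x v => partBound_mono_aux (p x v) (hp_pos x v) ξ Q hQ hΦ hΦ' href
end

section
/- The McCormick polytope is the convex envelope of the bilinear graph over the unit box: the convex hull (over ℝ) of the set {(x, v, w) ∈ ℝ × ℝ × ℝ : x ∈ [0,1], v ∈ [0,1], w = x·v} equals the set {(x, v, w) : 0 ≤ x ≤ 1, 0 ≤ v ≤ 1, max 0 (x + v − 1) ≤ w, w ≤ min x v}. (The claim, used by the paper via McCormick (1976), that the McCormick constraints form the convex envelope of a product of two variables on the unit box.) -/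
/-- McCormick (1976): the convex hull of the bilinear graph
`{(x, v, w) : x ∈ [0,1], v ∈ [0,1], w = x·v}` equals the McCormick polytope
`{(x, v, w) : 0 ≤ x ≤ 1, 0 ≤ v ≤ 1, max 0 (x + v − 1) ≤ w ≤ min x v}`. -/
theorem mccormick_convexHull :
    convexHull ℝ
        {q : ℝ × ℝ × ℝ |
          q.1 ∈ Set.Icc (0 : ℝ) 1 ∧ q.2.1 ∈ Set.Icc (0 : ℝ) 1 ∧
            q.2.2 = q.1 * q.2.1} =
      {q : ℝ × ℝ × ℝ |
        0 ≤ q.1 ∧ q.1 ≤ 1 ∧ 0 ≤ q.2.1 ∧ q.2.1 ≤ 1 ∧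
          max 0 (q.1 + q.2.1 - 1) ≤ q.2.2 ∧ q.2.2 ≤ min q.1 q.2.1} := by
  apply Set.Subset.antisymm
  · apply convexHull_min
    · rintro ⟨x, v, w⟩ ⟨⟨hx0, hx1⟩, ⟨hv0, hv1⟩, hw⟩
      simp only at hx0 hx1 hv0 hv1 hw
      subst hw
      refine ⟨hx0, hx1, hv0, hv1, ?_, ?_⟩
      · rw [max_le_iff]
        exact ⟨mul_nonneg hx0 hv0, by dsimp only; nlinarith⟩
      · rw [le_min_iff]
        constructor <;> (dsimp only; nlinarith)
    · rintro ⟨x₁, v₁, w₁⟩ h₁ ⟨x₂, v₂, w₂⟩ h₂ a b ha hb hab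
      simp only [Set.mem_setOf_eq, max_le_iff, le_min_iff] at h₁ h₂ ⊢
      obtain ⟨hx0, hx1, hv0, hv1, ⟨hw0, hw1⟩, hw2, hw3⟩ := h₁
      obtain ⟨hx0', hx1', hv0', hv1', ⟨hw0', hw1'⟩, hw2', hw3'⟩ := h₂
      simp only [Prod.smul_mk, Prod.mk_add_mk, smul_eq_mul]
      refine ⟨by nlinarith, by nlinarith, by nlinarith, by nlinarith,
        ⟨by nlinarith, by nlinarith⟩, by nlinarith, by nlinarith⟩
  · rintro ⟨x, v, w⟩ ⟨hx0, hx1, hv0, hv1, hw1, hw2⟩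
    rw [max_le_iff] at hw1
    rw [le_min_iff] at hw2
    obtain ⟨hw0, hwxv⟩ := hw1
    obtain ⟨hwx, hwv⟩ := hw2
    have hmem :=
      (convex_convexHull ℝ {q : ℝ × ℝ × ℝ |
          q.1 ∈ Set.Icc (0 : ℝ) 1 ∧ q.2.1 ∈ Set.Icc (0 : ℝ) 1 ∧
            q.2.2 = q.1 * q.2.1}).sum_mem
        (t := (Finset.univ : Finset (Fin 4)))
        (w := ![1 - x - v + w, x - w, v - w, w])
        (z := ![((0:ℝ), (0:ℝ), (0:ℝ)), (1, 0, 0), (0, 1, 0), (1, 1, 1)])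
        (by
          intro i _
          fin_cases i <;> simp <;> linarith)
        (by simp [Fin.sum_univ_four]; ring)
        (by
          intro i _
          apply subset_convexHull
          fin_cases i <;> simp)
    convert hmem using 1
    simp [Fin.sum_univ_four, Prod.ext_iff]
end
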